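/- Let S2 be a vertical grading on D_{a1,a2} with a2 > 0 and let r be an integer with r ≥ S2(v) for all v ∈ D2 and r ≥ ⌈a1/a2⌉. Let D' = D_{r·a2−a1,a2} with vertical edges D2' = {v'_1,…,v'_{a2}}, and define the vertical grading φ_r^*S2 on D2' by φ_r^*S2(v'_j) = r − S2(v_{a2+1−j}). Then for any v'_i, v'_j ∈ D2' one has f_{φ_r^*S2}(v̄'_i v'_j) = −f_{S2}(v̄_{a2−j} v_{a2−i}), where v̄'_i v'_j denotes the subpath of D' from v'_i to v'_j with v'_i removed and v̄_{a2−j} v_{a2−i} the subpath of D from v_{a2−j} to v_{a2−i} with v_{a2−j} removed (indices cyclic, v_0 = v_{a2}). -/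

import Mathlib

/-!
Number the vertical edges cyclically and place `v_t` at step `t + ⌈t a / b⌉` of the periodic
path. Then `v̄_t v_{t+k}` (for `k < b`) consists of `v_{t+1}, …, v_{t+k}` and
`⌈(t+k)a/b⌉ - ⌈ta/b⌉` horizontal edges. On `D_{rb-a,b}` one has
`⌈t(rb-a)/b⌉ = tr - ⌊ta/b⌋`, and on `D_{a,b}` one has `⌈(b-t)a/b⌉ = a - ⌊ta/b⌋`, so the
horizontal edges of the two subpaths number `kr` in total. Since `φ_r^*S2` reverses `S2` and
complements it to `r`, the two grading sums also add up to `kr`, and the two shadow statistics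
cancel.
-/

open scoped Classical
noncomputable section

namespace Dyck

/-- The edges of the maximal Dyck path `D_{a,b}`: `a` horizontal edges
`h_1, …, h_a` (0-indexed here) and `b` vertical edges `v_1, …, v_b`. -/
abbrev Edge (a b : ℕ) := Fin a ⊕ Fin b

/-- The height of the horizontal edge `h_{j+1}` of `D_{a,b}` is `⌊j·b/a⌋`. -/
def ht (a b : ℕ) (j : Fin a) : ℕ := j.1 * b / a

/-- The depth of the vertical edge `v_{j+1}` of `D_{a,b}` is `⌈(j+1)·a/b⌉`. -/
def dep (a b : ℕ) (j : Fin b) : ℕ := ((j.1 + 1) * a + b - 1) / b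

/-- The position (0-indexed) of an edge along the maximal Dyck path `D_{a,b}`:
a horizontal edge `h_{j+1}` is preceded by `j` horizontal edges and by `ht j`
vertical edges; a vertical edge `v_{j+1}` is preceded by `j` vertical edges and
by `dep j` horizontal edges. -/
def pos (a b : ℕ) : Edge a b → ℕ
  | Sum.inl j => j.1 + ht a b j
  | Sum.inr j => j.1 + dep a b j

/-- Cyclic distance from `e` to `f` along the closed loop `D_{a,b}`
(the endpoints `(0,0)` and `(a,b)` are identified). -/
def dd (a b : ℕ) (e f : Edge a b) : ℕ := (pos a b f + (a + b) - pos a b e) % (a + b)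

/-- The (cyclic) subpath of `D_{a,b}` from `e` to `f`, both included. -/
def subpath (a b : ℕ) (e f : Edge a b) : Finset (Edge a b) :=
  Finset.univ.filter fun g => dd a b e g ≤ dd a b e f

/-- The number of horizontal edges in a set of edges. -/
def hcount (a b : ℕ) (s : Finset (Edge a b)) : ℕ := (s.filter fun e => e.isLeft = true).card

/-- The number of vertical edges in a set of edges. -/
def vcount (a b : ℕ) (s : Finset (Edge a b)) : ℕ := (s.filter fun e => e.isRight = true).card

/-- The sum of a horizontal grading over the horizontal edges of a set of edges. -/
def hsum (a b : ℕ) (S1 : Fin a → ℕ) (s : Finset (Edge a b)) : ℕ :=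
  ∑ e ∈ s, Sum.elim S1 (fun _ => 0) e

/-- The sum of a vertical grading over the vertical edges of a set of edges. -/
def vsum (a b : ℕ) (S2 : Fin b → ℕ) (s : Finset (Edge a b)) : ℕ :=
  ∑ e ∈ s, Sum.elim (fun _ => 0) S2 e

/-- The horizontal shadow statistic `f_{S1}` of a set of edges. -/
def fH (a b : ℕ) (S1 : Fin a → ℕ) (s : Finset (Edge a b)) : ℤ :=
  (hsum a b S1 s : ℤ) - (vcount a b s : ℤ)

/-- The vertical shadow statistic `f_{S2}` of a set of edges. -/
def fV (a b : ℕ) (S2 : Fin b → ℕ) (s : Finset (Edge a b)) : ℤ :=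
  (vsum a b S2 s : ℤ) - (hcount a b s : ℤ)

/-- Horizontal grading condition (HGC) for the pair `(h, v)`: there is an edge `e`
with `he` a proper subpath of `hv` and `|(he)_2| = Σ_{h' ∈ (he)_1} S1(h')`. -/
def HGC (a b : ℕ) (S1 : Fin a → ℕ) (h : Fin a) (v : Fin b) : Prop :=
  ∃ e : Edge a b, dd a b (.inl h) e < dd a b (.inl h) (.inr v) ∧
    vcount a b (subpath a b (.inl h) e) = hsum a b S1 (subpath a b (.inl h) e)

/-- Vertical grading condition (VGC) for the pair `(h, v)`: there is an edge `e`
with `ev` a proper subpath of `hv` and `|(ev)_1| = Σ_{v' ∈ (ev)_2} S2(v')`. -/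
def VGC (a b : ℕ) (S2 : Fin b → ℕ) (h : Fin a) (v : Fin b) : Prop :=
  ∃ e : Edge a b, 0 < dd a b (.inl h) e ∧ dd a b (.inl h) e ≤ dd a b (.inl h) (.inr v) ∧
    hcount a b (subpath a b e (.inr v)) = vsum a b S2 (subpath a b e (.inr v))

/-- A pair of gradings `(S1, S2)` on `D_{a,b}` is compatible. -/
def Compatible (a b : ℕ) (S1 : Fin a → ℕ) (S2 : Fin b → ℕ) : Prop :=
  ∀ (h : Fin a) (v : Fin b), HGC a b S1 h v ∨ VGC a b S2 h v

/-- `e` is a "balanced" endpoint for the horizontal edge `h`: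
`|(he)_2| = Σ_{h' ∈ (he)_1} S1(h')`. -/
def balH (a b : ℕ) (S1 : Fin a → ℕ) (h : Fin a) (e : Edge a b) : Prop :=
  vcount a b (subpath a b (.inl h) e) = hsum a b S1 (subpath a b (.inl h) e)

/-- The local shadow `sh(h; S1)`: the vertical edges of the shortest balanced
subpath starting at `h` (all of `D2` if there is none). -/
def shH (a b : ℕ) (S1 : Fin a → ℕ) (h : Fin a) : Finset (Fin b) :=
  Finset.univ.filter fun v =>
    ∀ e : Edge a b, balH a b S1 h e → dd a b (.inl h) (.inr v) ≤ dd a b (.inl h) e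

/-- The shadow `sh(S1) = ⋃_h sh(h; S1)`. -/
def shadowH (a b : ℕ) (S1 : Fin a → ℕ) : Finset (Fin b) :=
  Finset.univ.filter fun v => ∃ h : Fin a, v ∈ shH a b S1 h

/-- The vertical edges removed from `sh(S1)` to form the remote shadow: for each
`d ∈ [1,a]`, the (up to) `S1(h_d)` vertical edges of depth `d` immediately
following `h_d`. -/
def removedH (a b : ℕ) (S1 : Fin a → ℕ) : Finset (Fin b) :=
  Finset.univ.filter fun v => ∃ hd : Fin a, hd.1 + 1 = dep a b v ∧
    (Finset.univ.filter fun v' : Fin b => dep a b v' = dep a b v ∧ v'.1 < v.1).card < S1 hd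

/-- The remote shadow `rsh(S1)`. -/
def rshH (a b : ℕ) (S1 : Fin a → ℕ) : Finset (Fin b) :=
  shadowH a b S1 \ removedH a b S1

/-- `e` is a "balanced" starting point for the vertical edge `v`:
`|(ev)_1| = Σ_{v' ∈ (ev)_2} S2(v')`. -/
def balV (a b : ℕ) (S2 : Fin b → ℕ) (e : Edge a b) (v : Fin b) : Prop :=
  hcount a b (subpath a b e (.inr v)) = vsum a b S2 (subpath a b e (.inr v))

/-- The local shadow `sh(v; S2)`: the horizontal edges of the shortest balanced
subpath ending at `v` (all of `D1` if there is none). -/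
def shV (a b : ℕ) (S2 : Fin b → ℕ) (v : Fin b) : Finset (Fin a) :=
  Finset.univ.filter fun h =>
    ∀ e : Edge a b, balV a b S2 e v → dd a b (.inl h) (.inr v) ≤ dd a b e (.inr v)

/-- The shadow `sh(S2) = ⋃_v sh(v; S2)`. -/
def shadowV (a b : ℕ) (S2 : Fin b → ℕ) : Finset (Fin a) :=
  Finset.univ.filter fun h => ∃ v : Fin b, h ∈ shV a b S2 v

/-- The horizontal edges removed from `sh(S2)` to form the remote shadow: for each
`ℓ ∈ [1,b]`, the (up to) `S2(v_ℓ)` horizontal edges of height `ℓ−1` immediately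
preceding `v_ℓ`. -/
def removedV (a b : ℕ) (S2 : Fin b → ℕ) : Finset (Fin a) :=
  Finset.univ.filter fun h => ∃ vl : Fin b, vl.1 = ht a b h ∧
    (Finset.univ.filter fun h' : Fin a => ht a b h' = ht a b h ∧ h.1 < h'.1).card < S2 vl

/-- The remote shadow `rsh(S2)`. -/
def rshV (a b : ℕ) (S2 : Fin b → ℕ) : Finset (Fin a) :=
  shadowV a b S2 \ removedV a b S2

/-- The support of a grading. -/
def suppH (a : ℕ) (S1 : Fin a → ℕ) : Finset (Fin a) := Finset.univ.filter fun h => S1 h ≠ 0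
def suppV (b : ℕ) (S2 : Fin b → ℕ) : Finset (Fin b) := Finset.univ.filter fun v => S2 v ≠ 0
/-- The horizontal edge `h_t` (1-based, cyclic) of `D_{a,b}` as a 0-based index. -/
def hIdx (a : ℕ) (t : ℕ) (ha : 0 < a) : Fin a := ⟨t % a, Nat.mod_lt _ ha⟩

/-- The vertical edge `v_t` (1-based, cyclic, `v_0 = v_b`) of `D_{a,b}` as a
0-based index. -/
def vIdx (b : ℕ) (t : ℕ) (hb : 0 < b) : Fin b := ⟨(t + b - 1) % b, Nat.mod_lt _ hb⟩

/-- `rsh(S1)_{j;d}` (here `j d : Fin a` are 0-based, denoting the paper's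
`h_{j+1}` and depth `d+1`): the vertical edges `v ∈ rsh(S1)` of depth `d+1` such
that `v ∈ sh(h_{j+1}; S1)` and `h_{j+1}` is the first edge before `v` with this
property. -/
def rshHjd (a b : ℕ) (S1 : Fin a → ℕ) (j d : Fin a) : Finset (Fin b) :=
  (rshH a b S1).filter fun v => dep a b v = d.1 + 1 ∧ v ∈ shH a b S1 j ∧
    ∀ j' : Fin a, v ∈ shH a b S1 j' →
      dd a b (Sum.inl j) (Sum.inr v) ≤ dd a b (Sum.inl j') (Sum.inr v)

/-- `rsh(S2)_{j;ℓ}` (here `j : Fin b` is 0-based, denoting the paper's `v_{j+1}`,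
and `ℓ` is a height): the horizontal edges `h ∈ rsh(S2)` of height `ℓ` such that
`h ∈ sh(v_{j+1}; S2)` and `v_{j+1}` is the first edge after `h` with this
property. -/
def rshVjl (a b : ℕ) (S2 : Fin b → ℕ) (j : Fin b) (l : ℕ) : Finset (Fin a) :=
  (rshV a b S2).filter fun h => ht a b h = l ∧ h ∈ shV a b S2 j ∧
    ∀ j' : Fin b, h ∈ shV a b S2 j' →
      dd a b (Sum.inl h) (Sum.inr j) ≤ dd a b (Sum.inl h) (Sum.inr j')
/-- The reversed complementary vertical grading `φ_r^* S2` on `D' = D_{r·b−a, b}`: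
`φ_r^*S2(v'_j) = r − S2(v_{b+1−j})` (0-based indexing). -/
def phiS2 (b r : ℕ) (S2 : Fin b → ℕ) : Fin b → ℕ :=
  fun k => r - S2 ⟨b - 1 - k.1, by have := k.isLt; omega⟩

lemma add_pred_div_add_div_eq {x y m b : ℕ} (hb : 0 < b) (h : x + y = m * b) :
    (x + b - 1) / b + y / b = m := by
  have hy := Nat.div_add_mod' y b
  have hρ := Nat.mod_lt y hb
  have hq : y / b ≤ m := by
    by_contra! hc
    have : (m + 1) * b ≤ y / b * b := Nat.mul_le_mul_right b hc
    rw [add_one_mul] at this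
    omega
  have hsub : (m - y / b) * b = m * b - y / b * b := Nat.sub_mul _ _ _
  have hle : y / b * b ≤ m * b := Nat.mul_le_mul_right b hq
  have : (x + b - 1) / b = m - y / b := by
    apply Nat.div_eq_of_lt_le
    · omega
    · rw [add_one_mul]; omega
  omega

section Positions

variable {a b : ℕ}

lemma ht_le (j : Fin a) : ht a b j ≤ b :=
  Nat.div_le_of_le_mul (Nat.mul_le_mul_right b j.2.le)

lemma ht_mono {j j' : Fin a} (h : j ≤ j') : ht a b j ≤ ht a b j' :=
  Nat.div_le_div_right (Nat.mul_le_mul_right b h)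

lemma dep_mono {k k' : Fin b} (h : k ≤ k') : dep a b k ≤ dep a b k' :=
  Nat.div_le_div_right (Nat.sub_le_sub_right
    (Nat.add_le_add_right (Nat.mul_le_mul_right a (Nat.succ_le_succ h)) _) _)

lemma pos_inl_strictMono : StrictMono fun j : Fin a => pos a b (.inl j) := fun j j' h => by
  have := ht_mono (b := b) h.le
  simp only [pos]
  omega

lemma pos_inr_strictMono : StrictMono fun k : Fin b => pos a b (.inr k) := fun k k' h => by
  have := dep_mono (a := a) h.le
  simp only [pos]
  omega

lemma ht_mul_le (j : Fin a) : ht a b j * a ≤ j * b := Nat.div_mul_le_self _ _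

lemma lt_ht_add_one_mul (j : Fin a) : j * b < (ht a b j + 1) * a := by
  rw [mul_comm _ a]
  exact Nat.lt_mul_div_succ _ j.pos

lemma mul_le_dep_mul (k : Fin b) : (k + 1) * a ≤ dep a b k * b := by
  have h : (k + 1) * a + b - 1 < b * (dep a b k + 1) := Nat.lt_mul_div_succ _ k.pos
  rw [show b * (dep a b k + 1) = dep a b k * b + b by ring] at h
  omega

lemma dep_mul_lt (k : Fin b) : dep a b k * b < (k + 1) * a + b := by
  have : dep a b k * b ≤ (k + 1) * a + b - 1 := Nat.div_mul_le_self _ _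
  have := k.pos
  omega

lemma dep_le (k : Fin b) : dep a b k ≤ a := by
  have h := dep_mul_lt (a := a) k
  have : (k + 1) * a ≤ b * a := Nat.mul_le_mul_right a k.2
  have e : (a + 1) * b = b * a + b := by ring
  have : dep a b k * b < (a + 1) * b := by omega
  exact Nat.lt_succ_iff.mp (Nat.lt_of_mul_lt_mul_right this)

lemma pos_lt (e : Edge a b) : pos a b e < a + b := by
  cases e with
  | inl j => have := ht_le (b := b) j; have := j.2; simp only [pos]; omega
  | inr k => have := dep_le (a := a) k; have := k.2; simp only [pos]; omega

/-- Equal positions would place `h_{j+1}` either above and to the left of `v_{k+1}` or below and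
to the right of it, against the floor/ceiling bounds on `ht` and `dep`. -/
lemma pos_inl_ne_pos_inr (j : Fin a) (k : Fin b) : pos a b (.inl j) ≠ pos a b (.inr k) := by
  intro hpos
  have hH := ht_mul_le (b := b) j
  have hH' := lt_ht_add_one_mul (b := b) j
  have hD := mul_le_dep_mul (a := a) k
  have hD' := dep_mul_lt (a := a) k
  simp only [pos] at hpos
  generalize ht a b j = H at *
  generalize dep a b k = D at *
  rcases lt_or_ge j.1 D with hjD | hDj
  · have h1 : (k.1 + 1) * a ≤ H * a := Nat.mul_le_mul_right a (by omega)
    have h2 : (j.1 + 1) * b ≤ D * b := Nat.mul_le_mul_right b hjD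
    nlinarith
  · have h1 : (H + 1) * a ≤ (k.1 + 1) * a := Nat.mul_le_mul_right a (by omega)
    have h2 : D * b ≤ j * b := Nat.mul_le_mul_right b hDj
    nlinarith

lemma pos_injective : Function.Injective (pos a b) := by
  rintro (j | k) (j' | k') h
  · exact congrArg _ (pos_inl_strictMono.injective h)
  · exact absurd h (pos_inl_ne_pos_inr j k')
  · exact absurd h.symm (pos_inl_ne_pos_inr j' k)
  · exact congrArg _ (pos_inr_strictMono.injective h)

end Positions

section Subpaths

variable {a b : ℕ}

lemma dd_injective (e : Edge a b) : Function.Injective (dd a b e) := by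
  intro f g h
  have he := pos_lt e
  have hmod : pos a b f + (a + b) - pos a b e ≡ pos a b g + (a + b) - pos a b e [MOD a + b] := h
  have hmod' := hmod.add_right (pos a b e)
  rw [Nat.sub_add_cancel (by omega), Nat.sub_add_cancel (by omega)] at hmod'
  exact pos_injective ((Nat.ModEq.add_right_cancel' _ hmod').eq_of_lt_of_lt (pos_lt f) (pos_lt g))

lemma dd_lt (e f : Edge a b) : dd a b e f < a + b :=
  Nat.mod_lt _ (by have := pos_lt e; omega)

lemma dd_self (e : Edge a b) : dd a b e e = 0 := by
  simp [dd]

lemma image_dd_univ (e : Edge a b) : Finset.univ.image (dd a b e) = Finset.range (a + b) := by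
  refine Finset.eq_of_subset_of_card_le (fun n hn => ?_) ?_
  · obtain ⟨f, -, rfl⟩ := Finset.mem_image.mp hn
    exact Finset.mem_range.mpr (dd_lt e f)
  · rw [Finset.card_image_of_injective _ (dd_injective e)]
    simp

lemma card_subpath (e f : Edge a b) : (subpath a b e f).card = dd a b e f + 1 := by
  have himage : (subpath a b e f).image (dd a b e) = Finset.range (dd a b e f + 1) := by
    rw [subpath, ← Finset.filter_image (p := (· ≤ dd a b e f)), image_dd_univ]
    ext n
    have := dd_lt e f
    simp only [Finset.mem_filter, Finset.mem_range]
    omega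
  rw [← Finset.card_range (dd a b e f + 1), ← himage,
    Finset.card_image_of_injective _ (dd_injective e)]

lemma card_subpath_sdiff_left (e f : Edge a b) : (subpath a b e f \ {e}).card = dd a b e f := by
  have he : e ∈ subpath a b e f := by simp [subpath, dd_self]
  rw [Finset.sdiff_singleton_eq_erase, Finset.card_erase_of_mem he, card_subpath,
    Nat.add_sub_cancel]

end Subpaths

section Statistics

variable {a b : ℕ}

lemma hcount_add_vcount (s : Finset (Edge a b)) : hcount a b s + vcount a b s = s.card := by
  rw [← Finset.card_filter_add_card_filter_not (s := s) (fun e : Edge a b => e.isLeft = true),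
    hcount, vcount]
  congr 2
  exact Finset.filter_congr (fun e _ => by cases e <;> simp)

lemma filter_isRight_eq_map (s : Finset (Edge a b)) :
    s.filter (fun e => e.isRight = true) =
      (Finset.univ.filter fun v => .inr v ∈ s).map Function.Embedding.inr := by
  ext e
  cases e <;> simp

lemma vcount_eq_card (s : Finset (Edge a b)) :
    vcount a b s = (Finset.univ.filter fun v => .inr v ∈ s).card := by
  rw [vcount, filter_isRight_eq_map, Finset.card_map]

lemma vsum_eq_sum (S2 : Fin b → ℕ) (s : Finset (Edge a b)) :
    vsum a b S2 s = ∑ v ∈ Finset.univ.filter (fun v => .inr v ∈ s), S2 v := by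
  rw [vsum, ← Finset.sum_filter_of_ne (p := fun e => e.isRight = true)
    (by rintro (_ | _) _ h <;> simp_all), filter_isRight_eq_map, Finset.sum_map]
  rfl

end Statistics

/-- `vTop a b t = t + ⌈t a / b⌉` counts the unit steps from the origin to the upper end of
`v_t` on the periodic extension of `D_{a,b}`; thus `pos a b v_t = vTop a b t - 1` for
`1 ≤ t ≤ b`. -/
def vTop (a b t : ℕ) : ℕ := t + (t * a + b - 1) / b

section VerticalEdges

variable {a b : ℕ}

lemma vTop_strictMono (a b : ℕ) : StrictMono (vTop a b) := fun t t' h => by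
  have : (t * a + b - 1) / b ≤ (t' * a + b - 1) / b :=
    Nat.div_le_div_right (Nat.sub_le_sub_right
      (Nat.add_le_add_right (Nat.mul_le_mul_right a h.le) _) _)
  simp only [vTop]
  omega

lemma vTop_add_mul (hb : 0 < b) (t q : ℕ) :
    vTop a b (t + q * b) = vTop a b t + q * (a + b) := by
  have : (t + q * b) * a + b - 1 = t * a + b - 1 + q * a * b := by
    rw [show (t + q * b) * a = t * a + q * a * b by ring]
    omega
  simp only [vTop]
  rw [this, Nat.add_mul_div_right _ _ hb]
  ring

lemma vIdx_add_mul (hb : 0 < b) (t q : ℕ) : vIdx b (t + q * b) hb = vIdx b t hb :=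
  Fin.ext <| by
    simp only [vIdx]
    rw [show t + q * b + b - 1 = t + b - 1 + q * b by omega, Nat.add_mul_mod_self_right]

lemma vIdx_injOn (hb : 0 < b) (t : ℕ) :
    Set.InjOn (fun u => vIdx b u hb) (Set.Ico t (t + b)) := by
  intro u hu u' hu' h
  simp only [Set.mem_Ico] at hu hu'
  have hmod : (t + b - 1) + (u - t) ≡ (t + b - 1) + (u' - t) [MOD b] := by
    have := congrArg Fin.val h
    simp only [vIdx] at this
    rwa [show t + b - 1 + (u - t) = u + b - 1 by omega,
      show t + b - 1 + (u' - t) = u' + b - 1 by omega]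
  have := (Nat.ModEq.add_left_cancel' _ hmod).eq_of_lt_of_lt (by omega) (by omega)
  omega

lemma exists_vIdx_eq (hb : 0 < b) (t : ℕ) (v : Fin b) :
    ∃ u ∈ Finset.Ico t (t + b), vIdx b u hb = v := by
  have himage : (Finset.Ico t (t + b)).image (fun u => vIdx b u hb) = Finset.univ := by
    apply Finset.eq_univ_of_card
    rw [Finset.card_image_of_injOn (by simpa using vIdx_injOn hb t), Nat.card_Ico]
    simp
  have hv : v ∈ (Finset.Ico t (t + b)).image (fun u => vIdx b u hb) := by
    rw [himage]
    exact Finset.mem_univ v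
  simpa using hv

lemma pos_vIdx (hb : 0 < b) {t : ℕ} (h1 : 1 ≤ t) (h2 : t ≤ b) :
    pos a b (.inr (vIdx b t hb)) + 1 = vTop a b t := by
  have : (t + b - 1) % b = t - 1 := by
    rw [show t + b - 1 = (t - 1) + 1 * b by omega, Nat.add_mul_mod_self_right,
      Nat.mod_eq_of_lt (by omega)]
  simp only [pos, vIdx, dep, vTop, this, Nat.sub_add_cancel h1]
  omega

lemma pos_vIdx_modEq (hb : 0 < b) (t : ℕ) :
    pos a b (.inr (vIdx b t hb)) + 1 ≡ vTop a b t [MOD a + b] := by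
  have hdiv := Nat.div_add_mod' (t + b - 1) b
  have hrem := Nat.mod_lt (t + b - 1) hb
  generalize (t + b - 1) / b = q at hdiv
  generalize (t + b - 1) % b = r at hdiv hrem
  have ht : t + 1 * b = (r + 1) + q * b := by omega
  have hidx : vIdx b t hb = vIdx b (r + 1) hb := by
    rw [← vIdx_add_mul hb t 1, ht, vIdx_add_mul]
  have htop : vTop a b t + 1 * (a + b) = vTop a b (r + 1) + q * (a + b) := by
    rw [← vTop_add_mul hb, ← vTop_add_mul hb, ht]
  rw [hidx, pos_vIdx hb (by omega) (by omega)]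
  calc vTop a b (r + 1) ≡ vTop a b (r + 1) + q * (a + b) [MOD a + b] :=
        (Nat.add_mul_mod_self_right _ _ _).symm
    _ = vTop a b t + 1 * (a + b) := htop.symm
    _ ≡ vTop a b t [MOD a + b] := Nat.add_mul_mod_self_right _ _ _

lemma dd_vIdx (hb : 0 < b) {t u : ℕ} (htu : t ≤ u) (hut : u < t + b) :
    dd a b (.inr (vIdx b t hb)) (.inr (vIdx b u hb)) = vTop a b u - vTop a b t := by
  have hmono : vTop a b t ≤ vTop a b u := (vTop_strictMono a b).monotone htu
  have hlt : vTop a b u < vTop a b t + (a + b) := by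
    have := vTop_strictMono a b (show u < t + 1 * b by omega)
    rwa [vTop_add_mul hb, one_mul] at this
  have he := pos_lt (.inr (vIdx b t hb) : Edge a b)
  refine Nat.mod_eq_of_modEq ?_ (by omega)
  refine Nat.ModEq.add_right_cancel' (pos a b (.inr (vIdx b t hb)) + 1) ?_
  calc pos a b (.inr (vIdx b u hb)) + (a + b) - pos a b (.inr (vIdx b t hb))
          + (pos a b (.inr (vIdx b t hb)) + 1)
        = pos a b (.inr (vIdx b u hb)) + 1 + 1 * (a + b) := by omega
    _ ≡ pos a b (.inr (vIdx b u hb)) + 1 [MOD a + b] := Nat.add_mul_mod_self_right _ _ _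
    _ ≡ vTop a b u [MOD a + b] := pos_vIdx_modEq hb u
    _ = vTop a b u - vTop a b t + vTop a b t := by omega
    _ ≡ vTop a b u - vTop a b t + (pos a b (.inr (vIdx b t hb)) + 1) [MOD a + b] :=
        (pos_vIdx_modEq hb t).symm.add_left _

lemma inr_vIdx_mem_subpath_sdiff_iff (hb : 0 < b) {t k u : ℕ} (hk : k < b)
    (hu : u ∈ Finset.Ico t (t + b)) :
    .inr (vIdx b u hb) ∈
        subpath a b (.inr (vIdx b t hb)) (.inr (vIdx b (t + k) hb)) \ {.inr (vIdx b t hb)} ↔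
      u ∈ Finset.Ioc t (t + k) := by
  rw [Finset.mem_Ico] at hu
  have hmono := (vTop_strictMono a b).le_iff_le (a := u) (b := t + k)
  have htu := (vTop_strictMono a b).monotone hu.1
  have htk := (vTop_strictMono a b).monotone (show t ≤ t + k by omega)
  have hne : vIdx b u hb = vIdx b t hb ↔ u = t :=
    (vIdx_injOn hb t).eq_iff (by simpa using hu) (by simpa using hb)
  simp only [Finset.mem_sdiff, subpath, Finset.mem_filter, Finset.mem_univ, true_and,
    Finset.mem_singleton, Sum.inr.injEq, dd_vIdx hb hu.1 hu.2,
    dd_vIdx hb (show t ≤ t + k by omega) (show t + k < t + b by omega), hne, Finset.mem_Ioc]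
  omega

lemma filter_inr_mem_subpath_vIdx (hb : 0 < b) (t : ℕ) {k : ℕ} (hk : k < b) :
    Finset.univ.filter (fun v => .inr v ∈
        subpath a b (.inr (vIdx b t hb)) (.inr (vIdx b (t + k) hb)) \ {.inr (vIdx b t hb)}) =
      (Finset.Ioc t (t + k)).image (fun u => vIdx b u hb) := by
  ext v
  obtain ⟨u, hu, rfl⟩ := exists_vIdx_eq hb t v
  rw [Finset.mem_filter, inr_vIdx_mem_subpath_sdiff_iff hb hk hu, Finset.mem_image]
  simp only [Finset.mem_univ, true_and]
  refine ⟨fun h => ⟨u, h, rfl⟩, fun ⟨u', hu', heq⟩ => ?_⟩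
  rw [Finset.mem_Ioc] at hu'
  rw [Finset.mem_Ico] at hu
  rwa [← (vIdx_injOn hb t) (show u' ∈ Set.Ico t (t + b) by simp; omega) (by simpa using hu) heq,
    Finset.mem_Ioc]

lemma fV_subpath_vIdx (hb : 0 < b) (S2 : Fin b → ℕ) (t : ℕ) {k : ℕ} (hk : k < b) :
    fV a b S2
        (subpath a b (.inr (vIdx b t hb)) (.inr (vIdx b (t + k) hb)) \ {.inr (vIdx b t hb)}) =
      ∑ u ∈ Finset.Ioc t (t + k), (S2 (vIdx b u hb) : ℤ)
        - ((((t + k) * a + b - 1) / b : ℕ) - ((t * a + b - 1) / b : ℕ)) := by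
  have hverts := filter_inr_mem_subpath_vIdx (a := a) hb t hk
  have hinj : Set.InjOn (fun u => vIdx b u hb) (Finset.Ioc t (t + k)) :=
    (vIdx_injOn hb t).mono fun u hu => by
      simp only [Finset.coe_Ioc, Set.mem_Ioc, Set.mem_Ico] at hu ⊢
      omega
  have hv : vcount a b
      (subpath a b (.inr (vIdx b t hb)) (.inr (vIdx b (t + k) hb)) \ {.inr (vIdx b t hb)}) = k := by
    rw [vcount_eq_card, hverts, Finset.card_image_of_injOn hinj, Nat.card_Ioc]
    omega
  have hh := hcount_add_vcount
    (subpath a b (.inr (vIdx b t hb)) (.inr (vIdx b (t + k) hb)) \ {.inr (vIdx b t hb)})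
  rw [hv, card_subpath_sdiff_left, dd_vIdx hb (by omega) (by omega)] at hh
  have hmono := (vTop_strictMono a b).monotone (show t ≤ t + k by omega)
  rw [fV, vsum_eq_sum, hverts, Finset.sum_image hinj]
  simp only [vTop] at hh hmono
  push_cast
  omega

end VerticalEdges

section Complement

variable {b : ℕ}

lemma phiS2_vIdx (hb : 0 < b) (r : ℕ) (S2 : Fin b → ℕ) {t u c : ℕ} (h : t + u = c * b + 1) :
    phiS2 b r S2 (vIdx b t hb) = r - S2 (vIdx b u hb) := by
  have hsum : (t + b - 1 + (u + b - 1)) % b = b - 1 := by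
    rw [show t + b - 1 + (u + b - 1) = (b - 1) + (c + 1) * b by rw [add_one_mul]; omega,
      Nat.add_mul_mod_self_right, Nat.mod_eq_of_lt (by omega)]
  have ht := Nat.mod_lt (t + b - 1) hb
  have hu := Nat.mod_lt (u + b - 1) hb
  rw [Nat.add_mod_eq_ite] at hsum
  simp only [phiS2, vIdx]
  congr 3
  split_ifs at hsum <;> omega

lemma sum_phiS2_vIdx (hb : 0 < b) {r : ℕ} (S2 : Fin b → ℕ) (hrS : ∀ v, S2 v ≤ r)
    {n m k c : ℕ} (h : n + k + m = c * b) :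
    ∑ t ∈ Finset.Ioc n (n + k), (phiS2 b r S2 (vIdx b t hb) : ℤ) =
      k * r - ∑ u ∈ Finset.Ioc m (m + k), (S2 (vIdx b u hb) : ℤ) := by
  have hreflect : ∑ t ∈ Finset.Ioc n (n + k), (S2 (vIdx b (n + k + m + 1 - t) hb) : ℤ) =
      ∑ u ∈ Finset.Ioc m (m + k), (S2 (vIdx b u hb) : ℤ) := by
    refine Finset.sum_nbij' (fun t => n + k + m + 1 - t) (fun u => n + k + m + 1 - u)
      ?_ ?_ ?_ ?_ (fun _ _ => rfl) <;> intro t ht <;> simp only [Finset.mem_Ioc] at ht ⊢ <;> omega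
  calc ∑ t ∈ Finset.Ioc n (n + k), (phiS2 b r S2 (vIdx b t hb) : ℤ)
      = ∑ t ∈ Finset.Ioc n (n + k), ((r : ℤ) - S2 (vIdx b (n + k + m + 1 - t) hb)) := by
        refine Finset.sum_congr rfl fun t ht => ?_
        rw [Finset.mem_Ioc] at ht
        rw [phiS2_vIdx hb r S2 (u := n + k + m + 1 - t) (c := c) (by omega), Nat.cast_sub (hrS _)]
    _ = k * r - ∑ u ∈ Finset.Ioc m (m + k), (S2 (vIdx b u hb) : ℤ) := by
        rw [Finset.sum_sub_distrib, hreflect, Finset.sum_const, Nat.card_Ioc,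
          Nat.add_sub_cancel_left, nsmul_eq_mul]

end Complement

/-- Between them, `v̄'_i v'_{i+k}` on `D_{rb-a,b}` and `v̄_{b-j} v_{b-j+k}` on `D_{a,b}` contain
`k r` horizontal edges, because `⌈x/b⌉ + ⌊y/b⌋ = m` whenever `x + y = m b`. -/
lemma horizontal_counts_add_complement {a b r i j k ε : ℕ} (hb : 0 < b) (hra : a ≤ r * b)
    (hjb : j ≤ b) (hijk : i + k = j + ε * b) :
    ((((i + k) * (r * b - a) + b - 1) / b : ℕ) - ((i * (r * b - a) + b - 1) / b : ℕ) : ℤ)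
      + ((((b - j + k) * a + b - 1) / b : ℕ) - (((b - j) * a + b - 1) / b : ℕ)) = k * r := by
  have h1 := add_pred_div_add_div_eq hb (x := (i + k) * (r * b - a)) (y := (i + k) * a)
    (m := (i + k) * r) (by rw [← mul_add, Nat.sub_add_cancel hra, mul_assoc])
  have h2 := add_pred_div_add_div_eq hb (x := i * (r * b - a)) (y := i * a)
    (m := i * r) (by rw [← mul_add, Nat.sub_add_cancel hra, mul_assoc])
  have h3 := add_pred_div_add_div_eq hb (x := (b - j) * a) (y := j * a)
    (m := a) (by rw [← add_mul, Nat.sub_add_cancel hjb, mul_comm])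
  have h4 := add_pred_div_add_div_eq hb (x := (b - j + k) * a) (y := i * a) (m := (ε + 1) * a)
    (by rw [← add_mul, show b - j + k + i = (ε + 1) * b by rw [add_one_mul]; omega,
      mul_right_comm])
  have h5 : (i + k) * a / b = j * a / b + ε * a := by
    rw [hijk, add_mul, mul_right_comm, Nat.add_mul_div_right _ _ hb]
  generalize ((i + k) * (r * b - a) + b - 1) / b = A₁ at h1 ⊢
  generalize (i * (r * b - a) + b - 1) / b = A₂ at h2 ⊢
  generalize ((b - j) * a + b - 1) / b = A₃ at h3 ⊢
  generalize ((b - j + k) * a + b - 1) / b = A₄ at h4 ⊢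
  generalize (i + k) * a / b = F₁ at h1 h5
  generalize i * a / b = F₂ at h2 h4
  generalize j * a / b = F₃ at h3 h5
  zify at h1 h2 h3 h4 h5
  linear_combination h1 - h2 - h3 + h4 - h5

/-- **Shadow statistics and the complementary grading.** For a vertical grading
`S2` on `D_{a,b}` with `b > 0`, `r ≥ max S2` and `r ≥ ⌈a/b⌉`, and any
`1 ≤ i, j ≤ b`, one has `f_{φ_r^*S2}(v̄'_i v'_j) = −f_{S2}(v̄_{b−j} v_{b−i})`
(indices cyclic, `v_0 = v_b`). -/
theorem shadow_statistic_complement (a b r : ℕ) (hb : 0 < b)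
    (S2 : Fin b → ℕ) (hrS : ∀ v, S2 v ≤ r) (hra : a ≤ r * b) :
    ∀ i j : ℕ, 1 ≤ i → i ≤ b → 1 ≤ j → j ≤ b →
      fV (r * b - a) b (phiS2 b r S2)
          (subpath (r * b - a) b (Sum.inr (vIdx b i hb)) (Sum.inr (vIdx b j hb)) \
            {Sum.inr (vIdx b i hb)})
        = - fV a b S2
            (subpath a b (Sum.inr (vIdx b (b - j) hb)) (Sum.inr (vIdx b (b - i) hb)) \
              {Sum.inr (vIdx b (b - j) hb)}) := by
  intro i j hi hib hj hjb
  obtain ⟨k, ε, hk, hijk⟩ : ∃ k ε, k < b ∧ i + k = j + ε * b := by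
    rcases le_or_gt i j with h | h
    · exact ⟨j - i, 0, by omega, by omega⟩
    · exact ⟨j + b - i, 1, by omega, by omega⟩
  have hj' : vIdx b j hb = vIdx b (i + k) hb := by rw [hijk, vIdx_add_mul]
  have hi' : vIdx b (b - i) hb = vIdx b (b - j + k) hb := by
    rw [show b - j + k = b - i + ε * b by omega, vIdx_add_mul]
  rw [hj', hi', fV_subpath_vIdx hb _ i hk, fV_subpath_vIdx hb _ (b - j) hk,
    sum_phiS2_vIdx hb S2 hrS (n := i) (m := b - j) (c := ε + 1) (by rw [add_one_mul]; omega)]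
  linarith [horizontal_counts_add_complement hb hra hjb hijk]

end Dyck
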